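/- Assume T is binary. Let u be an internal node with left child ℓ(u) and right child r(u), let R_u ⊆ subtree(u), and let R_ℓ = R_u ∩ subtree(ℓ(u)) and R_r = R_u ∩ subtree(r(u)). Let v ∈ anc(u) ∪ {ε}, where for any set S the convention pB_w(S ∪ {ε}) := pB_w(S) is used. If u ∈ R_u, then pB_u(R_u ∪ {v}) = pB_u({u, v}) + pB_{ℓ(u)}(R_ℓ ∪ {u}) + pB_{r(u)}(R_r ∪ {u}); if u ∉ R_u, then pB_u(R_u ∪ {v}) = pB_{ℓ(u)}(R_ℓ ∪ {v}) + pB_{r(u)}(R_r ∪ {v}). -/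

import Mathlib

open scoped Classical

section TreeDefs

variable {V : Type*}

/-- The set of strict ancestors of `u` in the rooted tree given by `parent`. -/
def ancSet (parent : V → V) (u : V) : Set V :=
  {v | v ≠ u ∧ ∃ n : ℕ, parent^[n] u = v}

/-- The set of nodes of the subtree rooted at `u` (including `u`). -/
def subtreeSet (parent : V → V) (u : V) : Set V :=
  {x | ∃ n : ℕ, parent^[n] x = u}

/-- The set of nodes strictly between `u` and its ancestor `v`. -/
def pathSet (parent : V → V) (u v : V) : Set V :=
  {w | w ∈ ancSet parent u ∧ v ∈ ancSet parent w}

/-- A node is internal if it has at least one child. -/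
def isInternal (parent : V → V) (u : V) : Prop :=
  ∃ w, w ≠ u ∧ parent w = u

/-- `T` is binary with left-child map `lc` and right-child map `rc`. -/
def isBinary (parent lc rc : V → V) : Prop :=
  ∀ u, isInternal parent u →
    lc u ≠ rc u ∧ parent (lc u) = u ∧ parent (rc u) = u ∧
    lc u ≠ u ∧ rc u ≠ u ∧
    ∀ w, w ≠ u → parent w = u → w = lc u ∨ w = rc u

/-- The usefulness indicator `I_q(u|R)` of node `u` for a query with
summed-out variables `Zq`, with respect to the materialized set `R`. -/
noncomputable def useful {α : Type*} (parent : V → V) (vars : V → Set α)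
    (Zq : Set α) (u : V) (R : Set V) : ℝ :=
  if vars u ⊆ Zq ∧ ∀ v ∈ ancSet parent u ∩ R, ¬ vars v ⊆ Zq then 1 else 0

/-- The expected usefulness `E[I(u|R)]` over the query distribution. -/
noncomputable def eInd {α Q : Type*} [Fintype Q] (parent : V → V) (vars : V → Set α)
    (Z : Q → Set α) (Pr : Q → ℝ) (u : V) (R : Set V) : ℝ :=
  ∑ q : Q, Pr q * useful parent vars (Z q) u R

/-- The utility `U(u) = Σ_{x ∈ subtree(u)} c(x)`. -/
noncomputable def util [Fintype V] (parent : V → V) (c : V → ℝ) (u : V) : ℝ :=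
  ∑ x ∈ Finset.univ.filter (fun x => x ∈ subtreeSet parent u), c x

/-- The benefit `B(R) = Σ_{u ∈ R} E[I(u|R)] · U(u)`. -/
noncomputable def benefit [Fintype V] {α Q : Type*} [Fintype Q]
    (parent : V → V) (vars : V → Set α) (Z : Q → Set α) (Pr : Q → ℝ)
    (c : V → ℝ) (R : Finset V) : ℝ :=
  ∑ u ∈ R, eInd parent vars Z Pr u (↑R) * util parent c u

/-- The partial benefit `pB_u(R) = Σ_{w ∈ R ∩ subtree(u)} E[I(w|R)] · U(w)`. -/
noncomputable def pB [Fintype V] {α Q : Type*} [Fintype Q]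
    (parent : V → V) (vars : V → Set α) (Z : Q → Set α) (Pr : Q → ℝ)
    (c : V → ℝ) (u : V) (R : Finset V) : ℝ :=
  ∑ w ∈ R.filter (fun w => w ∈ subtreeSet parent u),
    eInd parent vars Z Pr w (↑R) * util parent c w

end TreeDefs

/-!
Every node of `R_u ∪ {v}` that lies in `subtree(u)` is `u` itself or lies in exactly one of the
two child subtrees, so `pB_u` splits into a term for `u` and the partial benefits at the two
children. Whether a node `w` is useful depends only on which ancestors of `w` are materialized.
For `w` below a child of `u` these ancestors, inside `subtree(u)`, are `u` and nodes of the
child's subtree. If `u` is materialized, it also hides `v`: `vars u ⊆ vars v`, so whenever `v`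
would block `w`, so does `u`.
-/

section SubtreeOrder

variable {V : Type*} {parent : V → V}

theorem subtreeSet_self (u : V) : u ∈ subtreeSet parent u := ⟨0, rfl⟩

theorem subtreeSet_trans {x y z : V} (hxy : x ∈ subtreeSet parent y)
    (hyz : y ∈ subtreeSet parent z) : x ∈ subtreeSet parent z := by
  obtain ⟨n, rfl⟩ := hxy
  obtain ⟨m, rfl⟩ := hyz
  exact ⟨m + n, Function.iterate_add_apply parent m n x⟩

theorem mem_subtreeSet_of_parent_eq {s u : V} (hs : parent s = u) : s ∈ subtreeSet parent u :=
  ⟨1, hs⟩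

theorem parent_mem_subtreeSet {x y : V} (hxy : x ∈ subtreeSet parent y) (hne : x ≠ y) :
    parent x ∈ subtreeSet parent y := by
  obtain ⟨_ | n, hn⟩ := hxy
  · exact absurd hn hne
  · exact ⟨n, by rwa [Function.iterate_succ_apply] at hn⟩

theorem subtreeSet_total_of_mem {w x y : V} (hx : w ∈ subtreeSet parent x)
    (hy : w ∈ subtreeSet parent y) :
    x ∈ subtreeSet parent y ∨ y ∈ subtreeSet parent x := by
  obtain ⟨n, rfl⟩ := hx
  obtain ⟨m, rfl⟩ := hy
  rcases le_total n m with h | h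
  · exact Or.inl ⟨m - n, by rw [← Function.iterate_add_apply, Nat.sub_add_cancel h]⟩
  · exact Or.inr ⟨n - m, by rw [← Function.iterate_add_apply, Nat.sub_add_cancel h]⟩

theorem exists_child_of_mem_subtreeSet {x u : V} (hx : x ∈ subtreeSet parent u) (hxu : x ≠ u) :
    ∃ s, s ≠ u ∧ parent s = u ∧ x ∈ subtreeSet parent s := by
  obtain ⟨n, hn⟩ := hx
  induction n generalizing x with
  | zero => exact absurd hn hxu
  | succ n ih =>
    by_cases hp : parent x = u
    · exact ⟨x, hxu, hp, subtreeSet_self x⟩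
    · rw [Function.iterate_succ_apply] at hn
      obtain ⟨s, hsu, hs, hxs⟩ := ih hp hn
      exact ⟨s, hsu, hs, subtreeSet_trans (mem_subtreeSet_of_parent_eq rfl) hxs⟩

theorem subtreeSet_antisymm {root : V} (hroot : parent root = root)
    (hreach : ∀ x, ∃ n : ℕ, parent^[n] x = root) :
    ∀ ⦃x y : V⦄, x ∈ subtreeSet parent y → y ∈ subtreeSet parent x → x = y := by
  -- a point on a cycle of `parent` is the root: its orbit reaches the fixed point `root`
  have eq_root : ∀ {x : V} {p : ℕ}, 0 < p → parent^[p] x = x → x = root := by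
    intro x p hp hx
    obtain ⟨k, hk⟩ := hreach x
    have hper : parent^[p * k] x = x := (Function.IsPeriodicPt.mul_const hx k).eq
    have hk_le : k ≤ p * k := Nat.le_mul_of_pos_left k hp
    rwa [← Nat.sub_add_cancel hk_le, Function.iterate_add_apply, hk,
      Function.iterate_fixed hroot, eq_comm] at hper
  rintro x y ⟨n, hn⟩ ⟨m, hm⟩
  rcases Nat.eq_zero_or_pos (m + n) with h | h
  · rwa [Nat.eq_zero_of_add_eq_zero_left h] at hn
  · have hx : x = root := eq_root h (by rw [Function.iterate_add_apply, hn, hm])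
    subst hx
    rw [← hn, Function.iterate_fixed hroot]

theorem notMem_subtreeSet_of_mem_ancSet
    (hanti : ∀ ⦃x y : V⦄, x ∈ subtreeSet parent y → y ∈ subtreeSet parent x → x = y)
    {u v : V} (hv : v ∈ ancSet parent u) : v ∉ subtreeSet parent u :=
  fun hvu => hv.1 (hanti hvu hv.2)

theorem notMem_subtreeSet_of_parent_eq
    (hanti : ∀ ⦃x y : V⦄, x ∈ subtreeSet parent y → y ∈ subtreeSet parent x → x = y)
    {s u : V} (hs : parent s = u) (hsu : s ≠ u) : u ∉ subtreeSet parent s :=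
  fun hus => hsu (hanti (mem_subtreeSet_of_parent_eq hs) hus)

theorem mem_ancSet_of_mem_subtreeSet
    (hanti : ∀ ⦃x y : V⦄, x ∈ subtreeSet parent y → y ∈ subtreeSet parent x → x = y)
    {u v w : V} (hv : v ∈ ancSet parent u) (hw : w ∈ subtreeSet parent u) :
    v ∈ ancSet parent w :=
  ⟨fun hvw => notMem_subtreeSet_of_mem_ancSet hanti hv (hvw ▸ hw), subtreeSet_trans hw hv.2⟩

theorem mem_ancSet_of_parent_eq
    (hanti : ∀ ⦃x y : V⦄, x ∈ subtreeSet parent y → y ∈ subtreeSet parent x → x = y)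
    {s u w : V} (hs : parent s = u) (hsu : s ≠ u) (hw : w ∈ subtreeSet parent s) :
    u ∈ ancSet parent w :=
  ⟨fun huw => notMem_subtreeSet_of_parent_eq hanti hs hsu (huw ▸ hw),
    subtreeSet_trans hw (mem_subtreeSet_of_parent_eq hs)⟩

theorem eq_or_mem_subtreeSet_child
    (hanti : ∀ ⦃x y : V⦄, x ∈ subtreeSet parent y → y ∈ subtreeSet parent x → x = y)
    {s u w x : V} (hs : parent s = u) (hw : w ∈ subtreeSet parent s)
    (hwx : w ∈ subtreeSet parent x) (hx : x ∈ subtreeSet parent u) :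
    x = u ∨ x ∈ subtreeSet parent s := by
  rcases subtreeSet_total_of_mem hwx hw with hxs | hsx
  · exact Or.inr hxs
  · by_cases hsx' : s = x
    · exact Or.inr (hsx' ▸ subtreeSet_self s)
    · exact Or.inl (hanti hx (hs ▸ parent_mem_subtreeSet hsx hsx'))

theorem mem_subtreeSet_iff_of_isBinary {lc rc : V → V}
    (hbin : isBinary parent lc rc) {u : V} (hu : isInternal parent u) {x : V} :
    x ∈ subtreeSet parent u ↔
      x = u ∨ x ∈ subtreeSet parent (lc u) ∨ x ∈ subtreeSet parent (rc u) := by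
  obtain ⟨-, hl, hr, -, -, hchild⟩ := hbin u hu
  constructor
  · intro hx
    by_cases hxu : x = u
    · exact Or.inl hxu
    · obtain ⟨s, hsu, hs, hxs⟩ := exists_child_of_mem_subtreeSet hx hxu
      rcases hchild s hsu hs with rfl | rfl
      exacts [Or.inr (Or.inl hxs), Or.inr (Or.inr hxs)]
  · rintro (rfl | hx | hx)
    · exact subtreeSet_self x
    · exact subtreeSet_trans hx (mem_subtreeSet_of_parent_eq hl)
    · exact subtreeSet_trans hx (mem_subtreeSet_of_parent_eq hr)

theorem disjoint_subtreeSet_of_isBinary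
    (hanti : ∀ ⦃x y : V⦄, x ∈ subtreeSet parent y → y ∈ subtreeSet parent x → x = y)
    {lc rc : V → V}
    (hbin : isBinary parent lc rc) {u : V} (hu : isInternal parent u) :
    Disjoint (subtreeSet parent (lc u)) (subtreeSet parent (rc u)) := by
  obtain ⟨hne, hl, hr, hlu, hru, -⟩ := hbin u hu
  refine Set.disjoint_left.2 fun w hwl hwr => ?_
  rcases eq_or_mem_subtreeSet_child hanti hl hwl hwr (mem_subtreeSet_of_parent_eq hr)
    with hrc | hrc
  · exact hru hrc
  · have hu_rc := parent_mem_subtreeSet hrc (Ne.symm hne)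
    rw [hr] at hu_rc
    exact notMem_subtreeSet_of_parent_eq hanti hl hlu hu_rc

end SubtreeOrder

section PartialBenefit

variable {V α Q : Type*} [Fintype Q] {parent : V → V} {vars : V → Set α}
  {Z : Q → Set α} {Pr : Q → ℝ} {c : V → ℝ}

theorem eInd_congr {w : V} {R₁ R₂ : Set V}
    (h : ancSet parent w ∩ R₁ = ancSet parent w ∩ R₂) :
    eInd parent vars Z Pr w R₁ = eInd parent vars Z Pr w R₂ := by
  unfold eInd useful
  rw [h]

theorem eInd_union_of_subset_ancSet
    (hvars : ∀ u v : V, v ∈ ancSet parent u → vars u ⊆ vars v) {u w : V} {R A : Set V}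
    (hu : u ∈ ancSet parent w) (huR : u ∈ R) (hA : A ⊆ ancSet parent u) :
    eInd parent vars Z Pr w (R ∪ A) = eInd parent vars Z Pr w R := by
  refine Finset.sum_congr rfl fun q _ => ?_
  unfold useful
  congr 2
  refine propext <| and_congr_right fun _ => ⟨fun hR v hv => hR v ⟨hv.1, Or.inl hv.2⟩, ?_⟩
  rintro hR v ⟨hvw, hvR | hvA⟩ hvZ
  · exact hR v ⟨hvw, hvR⟩ hvZ
  · exact hR u ⟨hu, huR⟩ ((hvars u v (hA hvA)).trans hvZ)

theorem pB_congr [Fintype V] {s : V} {R R' : Finset V}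
    (hfilter : R.filter (· ∈ subtreeSet parent s) = R'.filter (· ∈ subtreeSet parent s))
    (heInd : ∀ w ∈ R.filter (· ∈ subtreeSet parent s),
      eInd parent vars Z Pr w R = eInd parent vars Z Pr w R') :
    pB parent vars Z Pr c s R = pB parent vars Z Pr c s R' := by
  unfold pB
  rw [← hfilter]
  exact Finset.sum_congr rfl fun w hw => by rw [heInd w hw]

variable [DecidableEq V]

theorem filter_union_of_subset_ancSet
    (hanti : ∀ ⦃x y : V⦄, x ∈ subtreeSet parent y → y ∈ subtreeSet parent x → x = y)
    {u : V} (R : Finset V) {A : Finset V} (hA : (A : Set V) ⊆ ancSet parent u) :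
    (R ∪ A).filter (· ∈ subtreeSet parent u) = R.filter (· ∈ subtreeSet parent u) := by
  rw [Finset.filter_union, Finset.filter_false_of_mem fun v hv =>
    notMem_subtreeSet_of_mem_ancSet hanti (hA hv), Finset.union_empty]

theorem eInd_self_union
    (hanti : ∀ ⦃x y : V⦄, x ∈ subtreeSet parent y → y ∈ subtreeSet parent x → x = y)
    {u : V} {R A : Finset V} (hR : (R : Set V) ⊆ subtreeSet parent u) :
    eInd parent vars Z Pr u ↑(R ∪ A) = eInd parent vars Z Pr u ↑(insert u A) := by
  refine eInd_congr (Set.ext fun x => ?_)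
  have hxR : x ∈ ancSet parent u → x ∉ R := fun hx hxR =>
    notMem_subtreeSet_of_mem_ancSet hanti hx (hR hxR)
  have hxu : x ∈ ancSet parent u → x ≠ u := fun hx => hx.1
  simp only [Set.mem_inter_iff, Finset.coe_union, Finset.coe_insert, Set.mem_union,
    Set.mem_insert_iff, Finset.mem_coe]
  tauto

variable [Fintype V]

theorem pB_insert_self
    (hanti : ∀ ⦃x y : V⦄, x ∈ subtreeSet parent y → y ∈ subtreeSet parent x → x = y)
    {u : V} {A : Finset V} (hA : (A : Set V) ⊆ ancSet parent u) :
    pB parent vars Z Pr c u (insert u A) =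
      eInd parent vars Z Pr u ↑(insert u A) * util parent c u := by
  rw [pB, Finset.insert_eq, filter_union_of_subset_ancSet hanti _ hA,
    Finset.filter_singleton, if_pos (subtreeSet_self u), Finset.sum_singleton]

theorem pB_eq_add_pB_children
    (hanti : ∀ ⦃x y : V⦄, x ∈ subtreeSet parent y → y ∈ subtreeSet parent x → x = y)
    {lc rc : V → V} (hbin : isBinary parent lc rc) {u : V} (hu : isInternal parent u)
    (R : Finset V) :
    pB parent vars Z Pr c u R =
      (if u ∈ R then eInd parent vars Z Pr u ↑R * util parent c u else 0) +
        pB parent vars Z Pr c (lc u) R + pB parent vars Z Pr c (rc u) R := by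
  have hdisj := Set.disjoint_left.1 (disjoint_subtreeSet_of_isBinary hanti hbin hu)
  obtain ⟨-, hl, hr, hlu, hru, -⟩ := hbin u hu
  have hu_lc := notMem_subtreeSet_of_parent_eq hanti hl hlu
  have hu_rc := notMem_subtreeSet_of_parent_eq hanti hr hru
  simp only [pB, Finset.sum_filter]
  rw [← Finset.sum_ite_eq' R u fun w => eInd parent vars Z Pr w ↑R * util parent c w,
    ← Finset.sum_add_distrib, ← Finset.sum_add_distrib]
  refine Finset.sum_congr rfl fun w _ => ?_
  rw [mem_subtreeSet_iff_of_isBinary hbin hu]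
  by_cases hwu : w = u
  · subst hwu
    simp [hu_lc, hu_rc]
  · by_cases hwl : w ∈ subtreeSet parent (lc u)
    · simp [hwu, hwl, hdisj hwl]
    · simp [hwu, hwl]

theorem pB_child_union_of_mem
    (hanti : ∀ ⦃x y : V⦄, x ∈ subtreeSet parent y → y ∈ subtreeSet parent x → x = y)
    (hvars : ∀ u v : V, v ∈ ancSet parent u → vars u ⊆ vars v) {s u : V}
    (hs : parent s = u) (hsu : s ≠ u) {R A : Finset V} (hR : (R : Set V) ⊆ subtreeSet parent u)
    (huR : u ∈ R) (hA : (A : Set V) ⊆ ancSet parent u) :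
    pB parent vars Z Pr c s (R ∪ A) =
      pB parent vars Z Pr c s (insert u (R.filter (· ∈ subtreeSet parent s))) := by
  have hAs : (A : Set V) ⊆ ancSet parent s := fun v hv =>
    mem_ancSet_of_mem_subtreeSet hanti (hA hv) (mem_subtreeSet_of_parent_eq hs)
  have hfilter :
      (R ∪ A).filter (· ∈ subtreeSet parent s) = R.filter (· ∈ subtreeSet parent s) :=
    filter_union_of_subset_ancSet hanti R hAs
  refine pB_congr ?_ fun w hw => ?_
  · rw [hfilter, Finset.filter_insert, if_neg (notMem_subtreeSet_of_parent_eq hanti hs hsu),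
      Finset.filter_filter]
    simp only [and_self]
  · rw [hfilter, Finset.mem_filter] at hw
    have huw := mem_ancSet_of_parent_eq hanti hs hsu hw.2
    rw [Finset.coe_union, eInd_union_of_subset_ancSet hvars huw huR hA]
    refine eInd_congr (Set.ext fun x => ?_)
    simp only [Set.mem_inter_iff, Finset.mem_coe, Finset.mem_insert, Finset.mem_filter]
    constructor
    · rintro ⟨hxw, hxR⟩
      exact ⟨hxw, (eq_or_mem_subtreeSet_child hanti hs hw.2 hxw.2 (hR hxR)).imp_right
        fun hxs => ⟨hxR, hxs⟩⟩
    · rintro ⟨hxw, rfl | ⟨hxR, -⟩⟩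
      exacts [⟨hxw, huR⟩, ⟨hxw, hxR⟩]

theorem pB_child_union_of_notMem
    (hanti : ∀ ⦃x y : V⦄, x ∈ subtreeSet parent y → y ∈ subtreeSet parent x → x = y)
    {s u : V} (hs : parent s = u) {R A : Finset V} (hR : (R : Set V) ⊆ subtreeSet parent u)
    (huR : u ∉ R) (hA : (A : Set V) ⊆ ancSet parent u) :
    pB parent vars Z Pr c s (R ∪ A) =
      pB parent vars Z Pr c s (R.filter (· ∈ subtreeSet parent s) ∪ A) := by
  have hAs : (A : Set V) ⊆ ancSet parent s := fun v hv =>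
    mem_ancSet_of_mem_subtreeSet hanti (hA hv) (mem_subtreeSet_of_parent_eq hs)
  have hfilter :
      (R ∪ A).filter (· ∈ subtreeSet parent s) = R.filter (· ∈ subtreeSet parent s) :=
    filter_union_of_subset_ancSet hanti R hAs
  refine pB_congr ?_ fun w hw => ?_
  · rw [hfilter, filter_union_of_subset_ancSet hanti _ hAs, Finset.filter_filter]
    simp only [and_self]
  · rw [hfilter, Finset.mem_filter] at hw
    refine eInd_congr (Set.ext fun x => ?_)
    have hxs : x ∈ ancSet parent w → x ∈ R → x ∈ subtreeSet parent s := fun hxw hxR =>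
      (eq_or_mem_subtreeSet_child hanti hs hw.2 hxw.2 (hR hxR)).resolve_left
        fun hxu => huR (hxu ▸ hxR)
    simp only [Set.mem_inter_iff, Finset.mem_coe, Finset.mem_union, Finset.mem_filter]
    tauto

end PartialBenefit

theorem partial_benefit_additivity_general {V α Q : Type*} [Fintype V] [DecidableEq V] [Fintype Q]
    (root : V) (parent : V → V)
    (hroot : parent root = root)
    (hreach : ∀ u, ∃ n : ℕ, parent^[n] u = root)
    (lc rc : V → V) (hbin : isBinary parent lc rc)
    (vars : V → Set α)
    (hvars : ∀ u v : V, v ∈ ancSet parent u → vars u ⊆ vars v)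
    (Z : Q → Set α) (Pr : Q → ℝ)
    (c : V → ℝ)
    (u : V) (hu : isInternal parent u)
    (Ru : Finset V) (hRu : (↑Ru : Set V) ⊆ subtreeSet parent u)
    (vo : Option V) (hvo : ∀ v ∈ vo, v ∈ ancSet parent u) :
    (u ∈ Ru →
      pB parent vars Z Pr c u (Ru ∪ vo.toFinset) =
        pB parent vars Z Pr c u (insert u vo.toFinset) +
        pB parent vars Z Pr c (lc u)
          (insert u (Ru.filter (fun w => w ∈ subtreeSet parent (lc u)))) +
        pB parent vars Z Pr c (rc u)
          (insert u (Ru.filter (fun w => w ∈ subtreeSet parent (rc u))))) ∧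
    (u ∉ Ru →
      pB parent vars Z Pr c u (Ru ∪ vo.toFinset) =
        pB parent vars Z Pr c (lc u)
          ((Ru.filter (fun w => w ∈ subtreeSet parent (lc u))) ∪ vo.toFinset) +
        pB parent vars Z Pr c (rc u)
          ((Ru.filter (fun w => w ∈ subtreeSet parent (rc u))) ∪ vo.toFinset)) := by
  have hanti := subtreeSet_antisymm hroot hreach
  obtain ⟨-, hl, hr, hlu, hru, -⟩ := hbin u hu
  have hA : (vo.toFinset : Set V) ⊆ ancSet parent u := fun v hv =>
    hvo v (Option.mem_toFinset.1 hv)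
  rw [pB_eq_add_pB_children hanti hbin hu (Ru ∪ vo.toFinset)]
  refine ⟨fun huR => ?_, fun huR => ?_⟩
  · rw [if_pos (Finset.mem_union_left _ huR), pB_insert_self hanti hA, eInd_self_union hanti hRu,
      pB_child_union_of_mem hanti hvars hl hlu hRu huR hA,
      pB_child_union_of_mem hanti hvars hr hru hRu huR hA]
  · have hu_notMem : u ∉ Ru ∪ vo.toFinset := fun h =>
      (Finset.mem_union.1 h).elim huR fun hu' => (hA hu').1 rfl
    rw [if_neg hu_notMem, zero_add, pB_child_union_of_notMem hanti hl hRu huR hA,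
      pB_child_union_of_notMem hanti hr hRu huR hA]

/-- Additivity: in a binary elimination tree, for an internal node
`u` with children `lc u`, `rc u`, a set `R_u ⊆ subtree(u)`, its restrictions
`R_ℓ`, `R_r` to the children's subtrees, and `v ∈ anc(u) ∪ {ε}` (the option
`vo`, where `ε = none` stands for no ancestor and `pB_w(S ∪ {ε}) := pB_w(S)`):
if `u ∈ R_u` then
`pB_u(R_u ∪ {v}) = pB_u({u,v}) + pB_{ℓ(u)}(R_ℓ ∪ {u}) + pB_{r(u)}(R_r ∪ {u})`,
and if `u ∉ R_u` then
`pB_u(R_u ∪ {v}) = pB_{ℓ(u)}(R_ℓ ∪ {v}) + pB_{r(u)}(R_r ∪ {v})`. -/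
theorem partial_benefit_additivity {V α Q : Type*} [Fintype V] [DecidableEq V] [Fintype Q]
    (root : V) (parent : V → V)
    (hroot : parent root = root)
    (hreach : ∀ u, ∃ n : ℕ, parent^[n] u = root)
    (lc rc : V → V) (hbin : isBinary parent lc rc)
    (vars : V → Set α)
    (hvars : ∀ u v : V, v ∈ ancSet parent u → vars u ⊆ vars v)
    (Z : Q → Set α) (Pr : Q → ℝ)
    (hPr0 : ∀ q, 0 ≤ Pr q) (hPr1 : ∑ q : Q, Pr q = 1)
    (c : V → ℝ) (hc : ∀ x, 0 ≤ c x)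
    (u : V) (hu : isInternal parent u)
    (Ru : Finset V) (hRu : (↑Ru : Set V) ⊆ subtreeSet parent u)
    (vo : Option V) (hvo : ∀ v ∈ vo, v ∈ ancSet parent u) :
    (u ∈ Ru →
      pB parent vars Z Pr c u (Ru ∪ vo.toFinset) =
        pB parent vars Z Pr c u (insert u vo.toFinset) +
        pB parent vars Z Pr c (lc u)
          (insert u (Ru.filter (fun w => w ∈ subtreeSet parent (lc u)))) +
        pB parent vars Z Pr c (rc u)
          (insert u (Ru.filter (fun w => w ∈ subtreeSet parent (rc u))))) ∧
    (u ∉ Ru →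
      pB parent vars Z Pr c u (Ru ∪ vo.toFinset) =
        pB parent vars Z Pr c (lc u)
          ((Ru.filter (fun w => w ∈ subtreeSet parent (lc u))) ∪ vo.toFinset) +
        pB parent vars Z Pr c (rc u)
          ((Ru.filter (fun w => w ∈ subtreeSet parent (rc u))) ∪ vo.toFinset)) :=
  partial_benefit_additivity_general root parent hroot hreach lc rc hbin vars hvars Z Pr c u hu Ru
    hRu vo hvo
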